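/- (Adversarial bound for differentially private mechanisms.) Let O be a measurable space, let μ and ν be probability measures on O, and let ε ≥ 0 and δ ≥ 0. Suppose that for every measurable set S ⊆ O both μ(S) ≤ e^ε · ν(S) + δ and ν(S) ≤ e^ε · μ(S) + δ hold. Then for every measurable function f : O → ℝ with 0 ≤ f ≤ 1, setting TP = ∫ f dμ and FP = ∫ f dν, if FP > 0 and TP < 1 then e^ε ≥ max( (TP − δ)/FP , (1 − FP − δ)/(1 − TP) ). -/

import Mathlib

/-!
By the layer-cake formula, `∫ f dμ = ∫₀¹ μ {f ≥ t} dt` for an attacker `f` with values in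
`[0, 1]`, so integrating the privacy inequality over the superlevel sets of `f` gives
`TP ≤ e^ε FP + δ`. The same argument for the complementary attacker `1 - f`, with the
roles of `μ` and `ν` exchanged, gives `1 - FP ≤ e^ε (1 - TP) + δ`.
-/

open MeasureTheory Set

section

variable {α : Type*} [MeasurableSpace α] {μ ν : Measure α} {f : α → ℝ}

lemma integrable_of_nonneg_of_le_one [IsFiniteMeasure μ] (hf : Measurable f)
    (hf0 : ∀ a, 0 ≤ f a) (hf1 : ∀ a, f a ≤ 1) : Integrable f μ :=
  .of_bound hf.aestronglyMeasurable 1 <| .of_forall fun a => by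
    rw [Real.norm_eq_abs, abs_of_nonneg (hf0 a)]
    exact hf1 a

lemma integral_one_sub [IsProbabilityMeasure μ] (hf : Integrable f μ) :
    ∫ a, (1 - f a) ∂μ = 1 - ∫ a, f a ∂μ := by
  simp [integral_sub (integrable_const 1) hf]

lemma antitone_measureReal_superlevel [IsFiniteMeasure μ] (f : α → ℝ) :
    Antitone fun t => μ.real {a | t ≤ f a} :=
  fun _ _ hst => measureReal_mono fun _ ha => hst.trans ha

lemma integral_le_mul_integral_add_of_measureReal_le [IsFiniteMeasure μ] [IsFiniteMeasure ν]
    {c δ : ℝ} (h : ∀ S, MeasurableSet S → μ.real S ≤ c * ν.real S + δ)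
    (hf : Measurable f) (hf0 : ∀ a, 0 ≤ f a) (hf1 : ∀ a, f a ≤ 1) :
    ∫ a, f a ∂μ ≤ c * ∫ a, f a ∂ν + δ := by
  have layercake (ρ : Measure α) [IsFiniteMeasure ρ] :
      ∫ a, f a ∂ρ = ∫ t in Ioc 0 1, ρ.real {a | t ≤ f a} :=
    (integrable_of_nonneg_of_le_one hf hf0 hf1).integral_eq_integral_Ioc_meas_le
      (.of_forall hf0) (.of_forall hf1)
  have integrableOn (ρ : Measure α) [IsFiniteMeasure ρ] :
      IntegrableOn (fun t => ρ.real {a | t ≤ f a}) (Ioc 0 1) :=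
    ((antitone_measureReal_superlevel f).locallyIntegrable.integrableOn_isCompact
      isCompact_Icc).mono_set Ioc_subset_Icc_self
  have integrableOn_const_δ : IntegrableOn (fun _ => δ) (Ioc (0 : ℝ) 1) :=
    integrableOn_const measure_Ioc_lt_top.ne
  calc ∫ a, f a ∂μ = ∫ t in Ioc 0 1, μ.real {a | t ≤ f a} := layercake μ
    _ ≤ ∫ t in Ioc 0 1, (c * ν.real {a | t ≤ f a} + δ) :=
      setIntegral_mono_on (integrableOn μ) (((integrableOn ν).const_mul c).add integrableOn_const_δ)
        measurableSet_Ioc fun t _ => h _ (hf measurableSet_Ici)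
    _ = c * ∫ a, f a ∂ν + δ := by
      rw [integral_add ((integrableOn ν).const_mul c) integrableOn_const_δ,
        integral_const_mul, setIntegral_const, ← layercake ν]
      simp

end

theorem dp_adversarial_bound_general {O : Type*} [MeasurableSpace O]
    (μ ν : Measure O) [IsProbabilityMeasure μ] [IsProbabilityMeasure ν]
    (ε δ : ℝ)
    (hDP₁ : ∀ S : Set O, MeasurableSet S →
      (μ S).toReal ≤ Real.exp ε * (ν S).toReal + δ)
    (hDP₂ : ∀ S : Set O, MeasurableSet S →
      (ν S).toReal ≤ Real.exp ε * (μ S).toReal + δ)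
    (f : O → ℝ) (hf : Measurable f) (hf0 : ∀ o, 0 ≤ f o) (hf1 : ∀ o, f o ≤ 1)
    (hFP : 0 < ∫ o, f o ∂ν) (hTP : ∫ o, f o ∂μ < 1) :
    max (((∫ o, f o ∂μ) - δ) / (∫ o, f o ∂ν))
        ((1 - (∫ o, f o ∂ν) - δ) / (1 - ∫ o, f o ∂μ)) ≤ Real.exp ε := by
  have h_attack := integral_le_mul_integral_add_of_measureReal_le hDP₁ hf hf0 hf1
  have h_complement := integral_le_mul_integral_add_of_measureReal_le hDP₂
    (f := fun o => 1 - f o) (measurable_const.sub hf) (fun o => sub_nonneg.2 (hf1 o))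
    (fun o => sub_le_self 1 (hf0 o))
  rw [integral_one_sub (integrable_of_nonneg_of_le_one hf hf0 hf1),
    integral_one_sub (integrable_of_nonneg_of_le_one hf hf0 hf1)] at h_complement
  refine max_le ?_ ?_
  · rw [div_le_iff₀ hFP]
    linarith
  · rw [div_le_iff₀ (sub_pos.2 hTP)]
    linarith

/-- Adversarial bound for differentially private mechanisms (Kairouz et al.):
if both μ(S) ≤ e^ε·ν(S) + δ and ν(S) ≤ e^ε·μ(S) + δ hold for all measurable S,
then for every measurable attacker f : O → [0,1] with TP = ∫ f dμ, FP = ∫ f dν,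
FP > 0 and TP < 1, we have e^ε ≥ max((TP − δ)/FP, (1 − FP − δ)/(1 − TP)). -/
theorem dp_adversarial_bound {O : Type*} [MeasurableSpace O]
    (μ ν : Measure O) [IsProbabilityMeasure μ] [IsProbabilityMeasure ν]
    (ε δ : ℝ) (hε : 0 ≤ ε) (hδ : 0 ≤ δ)
    (hDP₁ : ∀ S : Set O, MeasurableSet S →
      (μ S).toReal ≤ Real.exp ε * (ν S).toReal + δ)
    (hDP₂ : ∀ S : Set O, MeasurableSet S →
      (ν S).toReal ≤ Real.exp ε * (μ S).toReal + δ)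
    (f : O → ℝ) (hf : Measurable f) (hf0 : ∀ o, 0 ≤ f o) (hf1 : ∀ o, f o ≤ 1)
    (hFP : 0 < ∫ o, f o ∂ν) (hTP : ∫ o, f o ∂μ < 1) :
    max (((∫ o, f o ∂μ) - δ) / (∫ o, f o ∂ν))
        ((1 - (∫ o, f o ∂ν) - δ) / (1 - ∫ o, f o ∂μ)) ≤ Real.exp ε :=
  dp_adversarial_bound_general μ ν ε δ hDP₁ hDP₂ f hf hf0 hf1 hFP hTP
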